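/- arXiv:1712.05336 — 5 statements merged into one kernel-verified Lean document; each statement's English description precedes it below -/
import Mathlib

section
/- Let G be a topological group acting continuously on a topological space X with a d-open action. Then for every x ∈ X the closure of the orbit cl(G·x) is a clopen subset of X. -/
/-! Orbit closures are invariant, so `cl(G·y) ⊆ cl(G·x)` whenever `y ∈ cl(G·x)`; d-openness with
`U = G` makes `cl(G·y)` a neighbourhood of `y`, hence `cl(G·x)` is a neighbourhood of each of its
points. -/

open Set

theorem closure_range_subset_of_mem_closure_range {G X : Type*} [Mul G] [TopologicalSpace X]
    {α : G → X → X} (hαm : ∀ g g' x, α (g * g') x = α g (α g' x))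
    (hcont : ∀ g, Continuous (α g)) {x y : X}
    (hy : y ∈ closure (range fun g => α g x)) :
    closure (range fun g => α g y) ⊆ closure (range fun g => α g x) := by
  have hmapsTo : ∀ g, MapsTo (α g) (closure (range fun g => α g x))
      (closure (range fun g => α g x)) := fun g =>
    MapsTo.closure (fun _ ⟨g', hg'⟩ => ⟨g * g', hg' ▸ hαm g g' x⟩) (hcont g)
  exact closure_minimal (range_subset_iff.mpr fun g => hmapsTo g hy) isClosed_closure

theorem stmt7_general {G X : Type*} [Group G] [TopologicalSpace G]
    [TopologicalSpace X]
    (α : G → X → X)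
    (hαm : ∀ g g' x, α (g * g') x = α g (α g' x))
    (hαc : Continuous fun p : G × X => α p.1 p.2)
    (hdopen : ∀ (x : X) (U : Set G), IsOpen U → (1 : G) ∈ U →
      x ∈ interior (closure ((fun g => α g x) '' U))) :
    ∀ x : X, IsClopen (closure (Set.range fun g : G => α g x)) := by
  intro x
  have hcont : ∀ g, Continuous (α g) := fun g => hαc.comp (Continuous.prodMk_right g)
  refine ⟨isClosed_closure, subset_interior_iff_isOpen.mp fun y hy => ?_⟩
  have hy_nhds := hdopen y univ isOpen_univ (mem_univ 1)
  rw [image_univ] at hy_nhds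
  exact interior_mono (closure_range_subset_of_mem_closure_range hαm hcont hy) hy_nhds

theorem stmt7 {G X : Type*} [Group G] [TopologicalSpace G] [IsTopologicalGroup G]
    [TopologicalSpace X]
    (α : G → X → X)
    (hα1 : ∀ x, α 1 x = x) (hαm : ∀ g g' x, α (g * g') x = α g (α g' x))
    (hαc : Continuous fun p : G × X => α p.1 p.2)
    (hdopen : ∀ (x : X) (U : Set G), IsOpen U → (1 : G) ∈ U →
      x ∈ interior (closure ((fun g => α g x) '' U))) :
    ∀ x : X, IsClopen (closure (Set.range fun g : G => α g x)) :=
  stmt7_general α hαm hαc hdopen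
end

section
/- Let G be a topological group acting continuously, effectively and transitively on a Tychonoff space X with an equiuniformity 𝒰 of weight at most τ. Then the character of G in the topology of uniform convergence induced by 𝒰 is at most τ; consequently there exists a topological group H of character at most τ together with a continuous surjective homomorphism φ : G → H and a continuous transitive H-action γ on X with α(g,x) = γ(φ(g),x). -/
/-! The homomorphism is the identity of `G`, into `G` retopologized by uniform convergence on `X`.
Uniform continuity of every `α g` makes that topology a group topology for which the action stays
jointly continuous, and boundedness of the uniformity makes the identity continuous. Its
neighbourhoods of `g₀` are the sets `{g | ∀ x, (α g₀ x, α g x) ∈ V}`, `V` an entourage, so a base of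
the uniformity of size `τ` yields a neighbourhood base of size `τ`. -/

universe u

/-- The (identity-)neighborhood character of a point is at most `τ`. -/
def charLE (H : Type*) [TopologicalSpace H] (h : H) (τ : Cardinal) : Prop :=
  ∃ b : Set (Set H), Cardinal.mk b ≤ τ ∧
    ∀ U ∈ nhds h, ∃ V ∈ b, V ∈ nhds h ∧ V ⊆ U

/-- A topological group together with a continuous action on `X`. -/
structure TopGroupActionOn (X : Type u) [TopologicalSpace X] : Type (u + 1) where
  carrier : Type u
  [group : Group carrier]
  [topology : TopologicalSpace carrier]
  topgroup : IsTopologicalGroup carrier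
  act : carrier → X → X
  act_one : ∀ x, act 1 x = x
  act_mul : ∀ g h x, act (g * h) x = act g (act h x)
  act_cont : Continuous fun p : carrier × X => act p.1 p.2

def TopGroupActionOn.CharLE {X : Type u} [TopologicalSpace X]
    (A : TopGroupActionOn X) (τ : Cardinal) : Prop :=
  letI := A.group; letI := A.topology
  charLE A.carrier 1 τ

def TopGroupActionOn.Transitive {X : Type u} [TopologicalSpace X]
    (A : TopGroupActionOn X) : Prop :=
  ∀ x y : X, ∃ g, A.act g x = y

/-- `φ` is a continuous surjective homomorphism intertwining `α` with `A.act`. -/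
def TopGroupActionOn.IsEquivariantHom {X : Type u} [TopologicalSpace X]
    (A : TopGroupActionOn X) {G : Type*} [Group G] [TopologicalSpace G]
    (α : G → X → X) (φ : G → A.carrier) : Prop :=
  letI := A.group; letI := A.topology
  Function.Surjective φ ∧ Continuous φ ∧
    (∀ a b : G, φ (a * b) = φ a * φ b) ∧ ∀ g x, α g x = A.act (φ g) x

open Filter Topology Uniformity

abbrev uniformConvergenceTopology {G X : Type*} [UniformSpace X] (α : G → X → X) :
    TopologicalSpace G :=
  TopologicalSpace.induced (fun g => UniformFun.ofFun (α g)) (UniformFun.topologicalSpace X X)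

section

variable {G X : Type u} [UniformSpace X] (α : G → X → X)

theorem hasBasis_nhds_uniformConvergenceTopology (g₀ : G) :
    (@nhds G (uniformConvergenceTopology α) g₀).HasBasis (· ∈ 𝓤 X)
      fun V => {g | ∀ x, (α g₀ x, α g x) ∈ V} := by
  rw [uniformConvergenceTopology, nhds_induced]
  exact (UniformFun.hasBasis_nhds X X _).comap _

theorem charLE_uniformConvergenceTopology {τ : Cardinal}
    (hweight : ∃ b : Set (Set (X × X)), Cardinal.mk b ≤ τ ∧
      b ⊆ (𝓤 X).sets ∧ ∀ U ∈ 𝓤 X, ∃ V ∈ b, V ⊆ U) (g₀ : G) :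
    @charLE G (uniformConvergenceTopology α) g₀ τ := by
  have hbasis := hasBasis_nhds_uniformConvergenceTopology α g₀
  obtain ⟨b, hb_card, hb_sub, hb_base⟩ := hweight
  refine ⟨(fun V => {g | ∀ x, (α g₀ x, α g x) ∈ V}) '' b, Cardinal.mk_image_le.trans hb_card,
    fun U hU => ?_⟩
  obtain ⟨V, hV, hVU⟩ := hbasis.mem_iff.mp hU
  obtain ⟨W, hWb, hWV⟩ := hb_base V hV
  exact ⟨_, Set.mem_image_of_mem _ hWb, hbasis.mem_of_mem (hb_sub hWb),
    fun g hg => hVU fun x => hWV (hg x)⟩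

theorem continuous_act_uniformConvergenceTopology (hsat : ∀ g, UniformContinuous (α g)) :
    @Continuous (G × X) X
      (@instTopologicalSpaceProd G X (uniformConvergenceTopology α) _) _
      fun p => α p.1 p.2 := by
  let := uniformConvergenceTopology α
  refine continuous_iff_continuousAt.mpr fun ⟨g₀, x₀⟩ => ?_
  rw [ContinuousAt, nhds_prod_eq, (𝓝 (α g₀ x₀)).basis_sets.tendsto_right_iff]
  intro V hV
  obtain ⟨W, hW, hWV⟩ := comp_mem_uniformity_sets (mem_nhds_uniformity_iff_right.mp hV)
  filter_upwards [prod_mem_prod ((hasBasis_nhds_uniformConvergenceTopology α g₀).mem_of_mem hW)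
    (UniformSpace.ball_mem_nhds x₀ (hsat g₀ hW))] with ⟨g, x⟩ ⟨hg, hx⟩
  exact hWV (SetRel.prodMk_mem_comp hx (hg x)) rfl

variable [Group G] (hαm : ∀ g g' x, α (g * g') x = α g (α g' x))
include hαm

theorem isTopologicalGroup_uniformConvergenceTopology (hα1 : ∀ x, α 1 x = x)
    (hsat : ∀ g, UniformContinuous (α g)) :
    @IsTopologicalGroup G (uniformConvergenceTopology α) _ := by
  let := uniformConvergenceTopology α
  have hbasis := hasBasis_nhds_uniformConvergenceTopology α
  have hα_inv : ∀ g x, α g (α g⁻¹ x) = x := fun g x => by rw [← hαm, mul_inv_cancel, hα1]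
  have hα_inv' : ∀ g x, α g⁻¹ (α g x) = x := fun g x => by rw [← hαm, inv_mul_cancel, hα1]
  refine { continuous_mul := continuous_iff_continuousAt.mpr fun ⟨g₀, h₀⟩ => ?_,
           continuous_inv := continuous_iff_continuousAt.mpr fun g₀ => ?_ }
  · rw [ContinuousAt, nhds_prod_eq, (hbasis (g₀ * h₀)).tendsto_right_iff]
    intro V hV
    obtain ⟨W, hW, hWV⟩ := comp_mem_uniformity_sets hV
    filter_upwards [prod_mem_prod ((hbasis g₀).mem_of_mem hW)
      ((hbasis h₀).mem_of_mem (hsat g₀ hW))] with ⟨g, h⟩ ⟨hg, hh⟩ x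
    simp only [hαm]
    exact hWV (SetRel.prodMk_mem_comp (hh x) (hg _))
  · rw [ContinuousAt, (hbasis g₀⁻¹).tendsto_right_iff]
    intro V hV
    -- test `g` at the point `α g⁻¹ x`, after moving `V` back along the uniformly continuous `α g₀⁻¹`
    filter_upwards [(hbasis g₀).mem_of_mem (symmetrize_mem_uniformity (hsat g₀⁻¹ hV))]
      with g hg x
    simpa only [SetRel.mem_inv, Set.mem_preimage, hα_inv, hα_inv'] using (hg (α g⁻¹ x)).2

theorem continuous_ofFun_act [TopologicalSpace G] [ContinuousMul G]
    (hequi : ∀ U ∈ 𝓤 X, ∀ᶠ g in 𝓝 1, ∀ x, (x, α g x) ∈ U) :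
    Continuous fun g => UniformFun.ofFun (α g) := by
  refine continuous_iff_continuousAt.mpr fun g₀ => ?_
  rw [ContinuousAt, (UniformFun.hasBasis_nhds X X _).tendsto_right_iff]
  intro V hV
  have hright : Tendsto (· * g₀⁻¹) (𝓝 g₀) (𝓝 (1 : G)) := by
    simpa using (continuous_mul_const g₀⁻¹).tendsto g₀
  filter_upwards [hright (hequi V hV)] with g hg x
  simpa only [UniformFun.toFun_ofFun, ← hαm, inv_mul_cancel_right] using hg (α g₀ x)

end

theorem stmt14_general {G : Type u} {X : Type u} [Group G] [TopologicalSpace G]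
    [IsTopologicalGroup G] [UniformSpace X] (τ : Cardinal)
    (α : G → X → X)
    (hα1 : ∀ x, α 1 x = x) (hαm : ∀ g g' x, α (g * g') x = α g (α g' x))
    (htrans : ∀ x y : X, ∃ g : G, α g x = y)
    (hsat : ∀ g : G, UniformContinuous (α g))
    (hbdd : ∀ U ∈ uniformity X, ∃ O ∈ nhds (1 : G), ∃ V ∈ uniformity X,
      ∀ x y : X, (x, y) ∈ V → ∀ o ∈ O, (x, α o y) ∈ U)
    (hweight : ∃ b : Set (Set (X × X)), Cardinal.mk b ≤ τ ∧
      b ⊆ (uniformity X).sets ∧ ∀ U ∈ uniformity X, ∃ V ∈ b, V ⊆ U) :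
    @charLE G
        (TopologicalSpace.induced (fun g : G => UniformFun.ofFun (α g))
          (UniformFun.topologicalSpace X X)) 1 τ ∧
      ∃ A : TopGroupActionOn X, A.CharLE τ ∧ A.Transitive ∧
        ∃ φ : G → A.carrier, A.IsEquivariantHom α φ := by
  have hchar := charLE_uniformConvergenceTopology α hweight (1 : G)
  have hequi : ∀ U ∈ 𝓤 X, ∀ᶠ g in 𝓝 (1 : G), ∀ x, (x, α g x) ∈ U := fun U hU => by
    obtain ⟨O, hO, V, hV, hOV⟩ := hbdd U hU
    exact mem_of_superset hO fun o ho x => hOV x x (refl_mem_uniformity hV) o ho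
  let A : TopGroupActionOn X :=
    { carrier := G
      topology := uniformConvergenceTopology α
      topgroup := isTopologicalGroup_uniformConvergenceTopology α hαm hα1 hsat
      act := α
      act_one := hα1
      act_mul := hαm
      act_cont := continuous_act_uniformConvergenceTopology α hsat }
  exact ⟨hchar, A, hchar, htrans, id, Function.surjective_id,
    continuous_induced_rng.mpr (continuous_ofFun_act α hαm hequi), fun _ _ => rfl, fun _ _ => rfl⟩

theorem stmt14 {G : Type u} {X : Type u} [Group G] [TopologicalSpace G]
    [IsTopologicalGroup G] [UniformSpace X] [T2Space X] (τ : Cardinal)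
    (α : G → X → X)
    (hα1 : ∀ x, α 1 x = x) (hαm : ∀ g g' x, α (g * g') x = α g (α g' x))
    (hαc : Continuous fun p : G × X => α p.1 p.2)
    (heff : ∀ g : G, (∀ x, α g x = x) → g = 1)
    (htrans : ∀ x y : X, ∃ g : G, α g x = y)
    (hsat : ∀ g : G, UniformContinuous (α g))
    (hbdd : ∀ U ∈ uniformity X, ∃ O ∈ nhds (1 : G), ∃ V ∈ uniformity X,
      ∀ x y : X, (x, y) ∈ V → ∀ o ∈ O, (x, α o y) ∈ U)
    (hweight : ∃ b : Set (Set (X × X)), Cardinal.mk b ≤ τ ∧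
      b ⊆ (uniformity X).sets ∧ ∀ U ∈ uniformity X, ∃ V ∈ b, V ⊆ U) :
    @charLE G
        (TopologicalSpace.induced (fun g : G => UniformFun.ofFun (α g))
          (UniformFun.topologicalSpace X X)) 1 τ ∧
      ∃ A : TopGroupActionOn X, A.CharLE τ ∧ A.Transitive ∧
        ∃ φ : G → A.carrier, A.IsEquivariantHom α φ :=
  stmt14_general τ α hα1 hαm htrans hsat hbdd hweight
end

section
/- Let X be a Tychonoff space admitting a uniformity 𝒰 of weight at most τ compatible with its topology. Then there is no topological group G of pseudocharacter greater than τ acting continuously and effectively on X in such a way that 𝒰 is an equiuniformity for the action. -/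
/-! For each `U` in a base of the uniformity of size at most `τ`, boundedness of the action gives a
neighbourhood `O_U` of `1` whose elements move every point `U`-close to itself. An element lying in
every `O_U` therefore fixes each point of the Hausdorff space `X`, so it is `1` by effectiveness, and
the interiors of the `O_U` witness `ψ(G) ≤ τ`. -/

universe u

open Set Topology Uniformity Cardinal

theorem exists_isOpen_sInter_eq_singleton_of_iInter_subset {G ι : Type u} [TopologicalSpace G]
    {e : G} (O : ι → Set G) (hO : ∀ i, O i ∈ 𝓝 e) (hsub : ⋂ i, O i ⊆ {e}) :
    ∃ 𝒪 : Set (Set G), #𝒪 ≤ #ι ∧ (∀ U ∈ 𝒪, IsOpen U) ∧ ⋂₀ 𝒪 = {e} := by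
  refine ⟨range fun i => interior (O i), mk_range_le, ?_, ?_⟩
  · rintro _ ⟨i, rfl⟩
    exact isOpen_interior
  · rw [sInter_range]
    refine (iInter_mono fun i => interior_subset).trans hsub |>.antisymm ?_
    exact singleton_subset_iff.2 <| mem_iInter.2 fun i => mem_interior_iff_mem_nhds.2 (hO i)

theorem exists_nhds_one_forall_mem_uniformity_of_bounded {G X : Type*} [One G] [TopologicalSpace G]
    [UniformSpace X] {α : G → X → X}
    (hbdd : ∀ U ∈ 𝓤 X, ∃ O ∈ 𝓝 (1 : G), ∃ V ∈ 𝓤 X,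
      ∀ x y : X, (x, y) ∈ V → ∀ o ∈ O, (x, α o y) ∈ U)
    {U : Set (X × X)} (hU : U ∈ 𝓤 X) : ∃ O ∈ 𝓝 (1 : G), ∀ o ∈ O, ∀ x, (x, α o x) ∈ U := by
  obtain ⟨O, hO, V, hV, hOV⟩ := hbdd U hU
  exact ⟨O, hO, fun o ho x => hOV x x (refl_mem_uniformity hV) o ho⟩

theorem stmt15_general {G X : Type u} [Group G] [TopologicalSpace G]
    [UniformSpace X] [T2Space X] (τ : Cardinal.{u})
    (hweight : ∃ b : Set (Set (X × X)), Cardinal.mk b ≤ τ ∧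
      b ⊆ (uniformity X).sets ∧ ∀ U ∈ uniformity X, ∃ V ∈ b, V ⊆ U)
    (α : G → X → X)
    (heff : ∀ g : G, (∀ x, α g x = x) → g = 1)
    (hbdd : ∀ U ∈ uniformity X, ∃ O ∈ nhds (1 : G), ∃ V ∈ uniformity X,
      ∀ x y : X, (x, y) ∈ V → ∀ o ∈ O, (x, α o y) ∈ U) :
    ∃ 𝒪 : Set (Set G), Cardinal.mk 𝒪 ≤ τ ∧ (∀ U ∈ 𝒪, IsOpen U) ∧
      ⋂₀ 𝒪 = {(1 : G)} := by
  obtain ⟨b, hb_card, hb_sub, hb_basis⟩ := hweight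
  have hbasis : (𝓤 X).HasBasis (· ∈ b) id :=
    ⟨fun U => ⟨hb_basis U, fun ⟨V, hV, hVU⟩ => Filter.mem_of_superset (hb_sub hV) hVU⟩⟩
  choose O hO hOV using fun V : b =>
    exists_nhds_one_forall_mem_uniformity_of_bounded hbdd (hb_sub V.2)
  have hfix : ⋂ V, O V ⊆ {1} := fun g hg =>
    heff g fun x => (eq_of_uniformity_basis hbasis fun hV => hOV ⟨_, hV⟩ g (mem_iInter.1 hg _) x).symm
  obtain ⟨𝒪, h𝒪_card, h𝒪_open, h𝒪⟩ := exists_isOpen_sInter_eq_singleton_of_iInter_subset O hO hfix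
  exact ⟨𝒪, h𝒪_card.trans hb_card, h𝒪_open, h𝒪⟩

theorem stmt15 {G X : Type u} [Group G] [TopologicalSpace G] [IsTopologicalGroup G]
    [UniformSpace X] [T2Space X] (τ : Cardinal.{u})
    (hweight : ∃ b : Set (Set (X × X)), Cardinal.mk b ≤ τ ∧
      b ⊆ (uniformity X).sets ∧ ∀ U ∈ uniformity X, ∃ V ∈ b, V ⊆ U)
    (α : G → X → X)
    (hα1 : ∀ x, α 1 x = x) (hαm : ∀ g g' x, α (g * g') x = α g (α g' x))
    (hαc : Continuous fun p : G × X => α p.1 p.2)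
    (heff : ∀ g : G, (∀ x, α g x = x) → g = 1)
    (hsat : ∀ g : G, UniformContinuous (α g))
    (hbdd : ∀ U ∈ uniformity X, ∃ O ∈ nhds (1 : G), ∃ V ∈ uniformity X,
      ∀ x y : X, (x, y) ∈ V → ∀ o ∈ O, (x, α o y) ∈ U) :
    ∃ 𝒪 : Set (Set G), Cardinal.mk 𝒪 ≤ τ ∧ (∀ U ∈ 𝒪, IsOpen U) ∧
      ⋂₀ 𝒪 = {(1 : G)} :=
  stmt15_general τ hweight α heff hbdd
end

section
/- Let G be an ω-narrow topological group acting continuously and transitively on a topological space X of countable character. Then X is separable and has countable cellularity. -/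
/-!
Fix `x₀ ∈ X` and a countable base `(Uₙ)` at `x₀`. Since `u ↦ u⁻¹ • x₀` is continuous, the sets
`Vₙ = {u | u⁻¹ • x₀ ∈ Uₙ}` are neighbourhoods of `1`, so ω-narrowness gives countable `Aₙ`
with `Aₙ Vₙ = G`. Writing `g = a u` yields `a • x₀ = g • (u⁻¹ • x₀) ∈ g • Uₙ`; by transitivity the
translates `g • Uₙ` form a local base at every point, so `⋃ₙ Aₙ • x₀` is dense. A separable space
has countable cellularity.
-/

open Topology Pointwise

def IsOmegaNarrow (G : Type*) [Group G] [TopologicalSpace G] : Prop :=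
  ∀ U ∈ 𝓝 (1 : G), ∃ A : Set G, A.Countable ∧ ∀ g : G, ∃ a ∈ A, ∃ u ∈ U, g = a * u

section OmegaNarrowAction

variable {G X : Type*} [Group G] [TopologicalSpace G] [ContinuousInv G]
  [TopologicalSpace X] [MulAction G X] [ContinuousSMul G X]

theorem IsOmegaNarrow.exists_countable_smul_mem_smul (hG : IsOmegaNarrow G) {x : X} {W : Set X}
    (hW : W ∈ 𝓝 x) : ∃ A : Set G, A.Countable ∧ ∀ g : G, ∃ a ∈ A, a • x ∈ g • W := by
  have hV : {u : G | u⁻¹ • x ∈ W} ∈ 𝓝 (1 : G) := by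
    have hcont : Continuous fun u : G => u⁻¹ • x := continuous_inv.smul continuous_const
    exact hcont.continuousAt.preimage_mem_nhds (by simpa using hW)
  obtain ⟨A, hA, hcover⟩ := hG _ hV
  refine ⟨A, hA, fun g => ?_⟩
  obtain ⟨a, ha, u, hu, rfl⟩ := hcover g
  exact ⟨a, ha, u⁻¹ • x, hu, by simp only [smul_smul, mul_inv_cancel_right]⟩

theorem IsOmegaNarrow.separableSpace [FirstCountableTopology X] [MulAction.IsPretransitive G X]
    (hG : IsOmegaNarrow G) : TopologicalSpace.SeparableSpace X := by
  rcases isEmpty_or_nonempty X with _ | ⟨⟨x₀⟩⟩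
  · infer_instance
  obtain ⟨U, hU⟩ := (𝓝 x₀).exists_antitone_basis
  choose A hA hAU using fun n => hG.exists_countable_smul_mem_smul (hU.mem n)
  refine ⟨⟨⋃ n, (· • x₀) '' A n, Set.countable_iUnion fun n => (hA n).image _, ?_⟩⟩
  refine dense_iff_inter_open.mpr fun O hO ⟨y, hy⟩ => ?_
  obtain ⟨g, rfl⟩ := MulAction.exists_smul_eq G x₀ y
  have hgO : (g • ·) ⁻¹' O ∈ 𝓝 x₀ :=
    (continuous_const_smul g).continuousAt.preimage_mem_nhds (hO.mem_nhds hy)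
  obtain ⟨n, -, hn⟩ := hU.toHasBasis.mem_iff.mp hgO
  obtain ⟨a, ha, z, hz, hax⟩ := hAU n g
  exact ⟨a • x₀, hax ▸ hn hz, Set.mem_iUnion.mpr ⟨n, a, ha, rfl⟩⟩

end OmegaNarrowAction

theorem stmt16 {G X : Type*} [Group G] [TopologicalSpace G] [IsTopologicalGroup G]
    [TopologicalSpace X] [FirstCountableTopology X]
    (hnarrow : ∀ U ∈ nhds (1 : G), ∃ A : Set G, A.Countable ∧
      ∀ g : G, ∃ a ∈ A, ∃ u ∈ U, g = a * u)
    (α : G → X → X)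
    (hα1 : ∀ x, α 1 x = x) (hαm : ∀ g g' x, α (g * g') x = α g (α g' x))
    (hαc : Continuous fun p : G × X => α p.1 p.2)
    (htrans : ∀ x y : X, ∃ g : G, α g x = y) :
    TopologicalSpace.SeparableSpace X ∧
      ∀ 𝒞 : Set (Set X), (∀ c ∈ 𝒞, IsOpen c ∧ c.Nonempty) →
        𝒞.PairwiseDisjoint id → 𝒞.Countable := by
  let _ : MulAction G X := { smul := α, one_smul := hα1, mul_smul := hαm }
  have _ : ContinuousSMul G X := ⟨hαc⟩
  have _ : MulAction.IsPretransitive G X := ⟨htrans⟩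
  have hsep : TopologicalSpace.SeparableSpace X := IsOmegaNarrow.separableSpace (G := G) hnarrow
  exact ⟨hsep, fun 𝒞 h𝒞 hdisj =>
    hdisj.countable_of_isOpen (fun c hc => (h𝒞 c hc).1) fun c hc => (h𝒞 c hc).2⟩
end

section
/- Let G be a topological group whose underlying uniform space (with the two-sided uniformity) is complete and Baire (e.g., G Čech-complete), acting continuously and transitively on a Tychonoff space X, and suppose the natural extension of the action to the Raikov completion ρG of G is d-open. If X is compact with countable character, then X is metrizable. -/
/-!
Fix `x₀` and a decreasing countable base `B n` at `x₀`. Since `G` has small invariant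
neighbourhoods, there are open conjugation-invariant identity neighbourhoods `U n` with
`U n • x₀ ⊆ B n` and `U (n+1) * (U (n+1)⁻¹ * U (n+1)) ⊆ U n`. The relations
`E n = {(x, y) | y ∈ cl (U n • x)}` compose like entourages, and d-openness makes them symmetric
up to `V ↦ V⁻¹ * V`; hence each `E n` is a neighbourhood of the diagonal and
`cl (E (n+1)) ⊆ E n`. Invariance and transitivity reduce `⋂ E n = diagonal` to
`⋂ cl (B n) = {x₀}`. By compactness the `E n` are then a countable basis of `𝓝ˢ (diagonal X)`,
the uniformity of the compact space `X`, so `X` is metrizable.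
-/

open Filter Set Topology Pointwise Uniformity

theorem mul_self_subset_mul_inv_mul {G : Type*} [Group G] {U : Set G} (h : (1 : G) ∈ U) :
    U * U ⊆ U * (U⁻¹ * U) :=
  mul_subset_mul_left (subset_mul_right _ (by simpa using h))

section InvariantNeighborhoods

variable {G : Type*} [Group G] [UniformSpace G] [IsUniformGroup G]

/- A uniform group in Mathlib's sense has equal left and right uniformities, i.e. it is SIN;
this is what `eventually_forall_conj_nhds_one` encodes. -/
theorem exists_isOpen_conj_invariant_subset {V : Set G} (hV : V ∈ 𝓝 (1 : G)) :
    ∃ U : Set G, IsOpen U ∧ (1 : G) ∈ U ∧ (∀ g, ∀ u ∈ U, g * u * g⁻¹ ∈ U) ∧ U ⊆ V := by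
  set W : Set G := {x | ∀ g, g * x * g⁻¹ ∈ V}
  have hW : W ∈ 𝓝 (1 : G) := eventually_forall_conj_nhds_one hV
  refine ⟨interior W, isOpen_interior, mem_interior_iff_mem_nhds.2 hW, fun g u hu => ?_,
    fun u hu => by simpa using interior_subset hu 1⟩
  have hsub : (fun x => g⁻¹ * x * g) ⁻¹' interior W ⊆ W := fun x hx g' => by
    simpa [mul_assoc] using interior_subset hx (g' * g)
  refine interior_maximal hsub (isOpen_interior.preimage (by fun_prop)) ?_
  simpa [mul_assoc] using hu

theorem exists_isOpen_conj_invariant_mul_inv_mul_subset {V : Set G} (hV : V ∈ 𝓝 (1 : G)) :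
    ∃ U : Set G, IsOpen U ∧ (1 : G) ∈ U ∧ (∀ g, ∀ u ∈ U, g * u * g⁻¹ ∈ U) ∧
      U * (U⁻¹ * U) ⊆ V := by
  obtain ⟨W, hW, -, -, hWW⟩ := exists_closed_nhds_one_inv_eq_mul_subset hV
  obtain ⟨W', hW', -, hW'inv, hW'W'⟩ := exists_closed_nhds_one_inv_eq_mul_subset hW
  obtain ⟨U, hUo, hU1, hUconj, hUW'⟩ := exists_isOpen_conj_invariant_subset hW'
  refine ⟨U, hUo, hU1, hUconj, ?_⟩
  have hUinv : U⁻¹ ⊆ W' := hW'inv ▸ inv_subset_inv.2 hUW'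
  calc U * (U⁻¹ * U) ⊆ W' * (W' * W') := mul_subset_mul hUW' (mul_subset_mul hUinv hUW')
    _ ⊆ W * W := mul_subset_mul ((subset_mul_left W' (mem_of_mem_nhds hW')).trans hW'W') hW'W'
    _ ⊆ V := hWW

theorem exists_seq_isOpen_conj_invariant_nhds {V : ℕ → Set G} (hV : ∀ n, V n ∈ 𝓝 (1 : G)) :
    ∃ U : ℕ → Set G, (∀ n, IsOpen (U n)) ∧ (∀ n, (1 : G) ∈ U n) ∧
      (∀ n g, ∀ u ∈ U n, g * u * g⁻¹ ∈ U n) ∧ (∀ n, U n ⊆ V n) ∧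
      ∀ n, U (n + 1) * ((U (n + 1))⁻¹ * U (n + 1)) ⊆ U n := by
  choose W hWo hW1 hWconj hWsub using
    fun (S : Set G) (hS : S ∈ 𝓝 (1 : G)) => exists_isOpen_conj_invariant_mul_inv_mul_subset hS
  have hWS : ∀ S hS, W S hS ⊆ S := fun S hS => (subset_mul_left _ (hW1 S hS)).trans <|
    (mul_self_subset_mul_inv_mul (hW1 S hS)).trans (hWsub S hS)
  let U : ℕ → {S : Set G // S ∈ 𝓝 (1 : G)} := fun n =>
    Nat.rec ⟨W (V 0) (hV 0), (hWo _ _).mem_nhds (hW1 _ _)⟩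
      (fun n S => ⟨W (S.1 ∩ V (n + 1)) (inter_mem S.2 (hV _)), (hWo _ _).mem_nhds (hW1 _ _)⟩) n
  refine ⟨fun n => (U n).1, fun n => ?_, fun n => ?_, fun n => ?_, fun n => ?_, fun n => ?_⟩
  · cases n <;> exact hWo _ _
  · cases n <;> exact hW1 _ _
  · cases n <;> exact hWconj _ _
  · cases n
    · exact hWS _ _
    · exact (hWS _ _).trans inter_subset_right
  · exact (hWsub _ _).trans inter_subset_left

end InvariantNeighborhoods

theorem Filter.HasBasis.eq_of_forall_mem_closure {X ι : Type*} [TopologicalSpace X] [T2Space X]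
    {x w : X} {p : ι → Prop} {s : ι → Set X} (h : (𝓝 x).HasBasis p s)
    (hw : ∀ i, p i → w ∈ closure (s i)) : w = x :=
  of_not_not fun hne =>
    clusterPt_iff_not_disjoint.1 (h.clusterPt_iff_forall_mem_closure.2 hw)
      (disjoint_nhds_nhds.2 hne)

/- By compactness the `E n` form a basis of `𝓝ˢ (diagonal X)`, which is the uniformity of the
compact Hausdorff space `X`. -/
theorem metrizableSpace_of_nested_nhds_diagonal {X : Type*} [TopologicalSpace X] [CompactSpace X]
    [T2Space X] (E : ℕ → Set (X × X)) (hE : ∀ n x, E n ∈ 𝓝 (x, x))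
    (hcl : ∀ n, closure (E (n + 1)) ⊆ E n) (hdiag : ∀ p : X × X, (∀ n, p ∈ E n) → p.1 = p.2) :
    TopologicalSpace.MetrizableSpace X := by
  have hEdiag : ∀ n, E n ∈ 𝓝ˢ (diagonal X) := fun n =>
    mem_nhdsSet_iff_forall.2 fun ⟨x, _⟩ hx => (show x = _ from hx) ▸ hE n x
  have hbasis : (𝓝ˢ (diagonal X)).HasBasis (fun _ : ℕ => True) E := by
    refine ⟨fun S => ⟨fun hS => ?_, fun ⟨n, _, hn⟩ => mem_of_superset (hEdiag n) hn⟩⟩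
    have hanti : Antitone fun n => closure (E (n + 1)) :=
      antitone_nat_of_succ_le fun n => (hcl (n + 1)).trans subset_closure
    obtain ⟨n, hn⟩ := exists_subset_nhds_of_isCompact' hanti.directed_ge
      (fun _ => isClosed_closure.isCompact) (fun _ => isClosed_closure) fun p hp =>
        mem_nhdsSet_iff_forall.1 hS p (hdiag p fun n => hcl n (mem_iInter.1 hp n))
    exact ⟨n + 1, trivial, subset_closure.trans hn⟩
  let _ : UniformSpace X := uniformSpaceOfCompactR1
  have : IsCountablyGenerated (𝓤 X) := hbasis.isCountablyGenerated
  exact UniformSpace.metrizableSpace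

section OrbitClosureRel

variable {G X : Type*} [TopologicalSpace X]

def orbitClosureRel [Monoid G] [MulAction G X] (U : Set G) : Set (X × X) :=
  {p | p.2 ∈ closure ((· • p.1) '' U)}

def IsDOpenAction (G X : Type*) [Monoid G] [TopologicalSpace G] [TopologicalSpace X]
    [MulAction G X] : Prop :=
  ∀ (x : X) (U : Set G), IsOpen U → (1 : G) ∈ U → x ∈ interior (closure ((· • x) '' U))

section Monoid

variable [Monoid G] [MulAction G X]

theorem mem_orbitClosureRel {U : Set G} {x y : X} :
    (x, y) ∈ orbitClosureRel U ↔ y ∈ closure ((· • x) '' U) :=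
  Iff.rfl

theorem orbitClosureRel_mono {U V : Set G} (h : U ⊆ V) :
    orbitClosureRel (X := X) U ⊆ orbitClosureRel V :=
  fun _ hp => closure_mono (image_mono h) hp

theorem smul_mem_orbitClosureRel_singleton (g : G) (x : X) :
    (x, g • x) ∈ orbitClosureRel {g} :=
  subset_closure (mem_image_of_mem _ rfl)

theorem orbitClosureRel_trans [ContinuousConstSMul G X] {S T : Set G} {x y z : X}
    (hxy : (x, y) ∈ orbitClosureRel S) (hyz : (y, z) ∈ orbitClosureRel T) :
    (x, z) ∈ orbitClosureRel (T * S) := by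
  refine closure_minimal ?_ isClosed_closure hyz
  rintro _ ⟨t, ht, rfl⟩
  have hts : (t • ·) '' ((· • x) '' S) ⊆ (· • x) '' (T * S) := by
    rintro _ ⟨_, ⟨s, hs, rfl⟩, rfl⟩
    exact ⟨t * s, mul_mem_mul ht hs, mul_smul t s x⟩
  exact closure_mono hts (image_closure_subset_closure_image (continuous_const_smul t)
    (mem_image_of_mem _ hxy))

end Monoid

section Group

variable [Group G] [MulAction G X] [ContinuousConstSMul G X]

theorem smul_mem_orbitClosureRel_of_conj_invariant {U : Set G}
    (hU : ∀ g, ∀ u ∈ U, g * u * g⁻¹ ∈ U) (g : G) {x y : X} (h : (x, y) ∈ orbitClosureRel U) :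
    (g • x, g • y) ∈ orbitClosureRel U := by
  have hx : (g • x, x) ∈ orbitClosureRel {g⁻¹} := by
    simpa using smul_mem_orbitClosureRel_singleton g⁻¹ (g • x)
  refine orbitClosureRel_mono ?_ <| orbitClosureRel_trans (orbitClosureRel_trans hx h)
    (smul_mem_orbitClosureRel_singleton g y)
  rintro _ ⟨a, ha, _, ⟨u, hu, b, hb, rfl⟩, rfl⟩
  rw [mem_singleton_iff] at ha hb
  simpa only [ha, hb, ← mul_assoc] using hU g u hu

theorem eq_of_forall_mem_orbitClosureRel [T2Space X] [MulAction.IsPretransitive G X] {x₀ : X}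
    {B : ℕ → Set X} (hB : (𝓝 x₀).HasBasis (fun _ => True) B) {U : ℕ → Set G}
    (hU : ∀ n g, ∀ u ∈ U n, g * u * g⁻¹ ∈ U n) (hUB : ∀ n, (· • x₀) '' U n ⊆ B n) {x y : X}
    (h : ∀ n, (x, y) ∈ orbitClosureRel (U n)) : x = y := by
  obtain ⟨g, rfl⟩ := MulAction.exists_smul_eq G x₀ x
  have hy : g⁻¹ • y = x₀ := hB.eq_of_forall_mem_closure fun n _ => closure_mono (hUB n) <|
    mem_orbitClosureRel.1 <| by
      simpa using smul_mem_orbitClosureRel_of_conj_invariant (hU n) g⁻¹ (h n)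
  rw [← hy, smul_inv_smul]

variable [TopologicalSpace G]

/- `cl (V • y)` is a neighbourhood of `y` by d-openness, so it meets `V • x` at some `v • x`. -/
theorem IsDOpenAction.orbitClosureRel_swap (hd : IsDOpenAction G X) {V : Set G} (hV : IsOpen V)
    (hV1 : (1 : G) ∈ V) {x y : X} (h : (x, y) ∈ orbitClosureRel V) :
    (y, x) ∈ orbitClosureRel (V⁻¹ * V) := by
  obtain ⟨_, hvx, v, hv, rfl⟩ := mem_closure_iff.1 h _ isOpen_interior (hd y V hV hV1)
  have hx : (v • x, x) ∈ orbitClosureRel {v⁻¹} := by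
    simpa using smul_mem_orbitClosureRel_singleton v⁻¹ (v • x)
  exact orbitClosureRel_mono (mul_subset_mul_right (singleton_subset_iff.2 (inv_mem_inv.2 hv)))
    (orbitClosureRel_trans (mem_orbitClosureRel.2 (interior_subset hvx)) hx)

theorem IsDOpenAction.orbitClosureRel_mem_nhds (hd : IsDOpenAction G X) {V : Set G}
    (hV : IsOpen V) (hV1 : (1 : G) ∈ V) (x : X) :
    orbitClosureRel (V * (V⁻¹ * V)) ∈ 𝓝 (x, x) := by
  refine mem_of_superset ((isOpen_interior.prod isOpen_interior).mem_nhds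
    (mk_mem_prod (hd x V hV hV1) (hd x V hV hV1))) ?_
  rintro ⟨y, z⟩ ⟨hy, hz⟩
  exact orbitClosureRel_trans (hd.orbitClosureRel_swap hV hV1 (interior_subset hy :))
    (interior_subset hz :)

theorem IsDOpenAction.closure_orbitClosureRel_subset (hd : IsDOpenAction G X) {V : Set G}
    (hV : IsOpen V) (hV1 : (1 : G) ∈ V) :
    closure (orbitClosureRel (X := X) V) ⊆ orbitClosureRel (V * V) := by
  rintro ⟨x, z⟩ hxz
  refine mem_closure_iff.2 fun N hN hzN => ?_
  obtain ⟨⟨y, w⟩, ⟨hy, hwN⟩, hyw⟩ := mem_closure_iff.1 hxz _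
    (isOpen_interior.prod hN) (mk_mem_prod (hd x V hV hV1) hzN)
  exact mem_closure_iff.1 (orbitClosureRel_trans (interior_subset hy :) hyw) N hN hwN

end Group

end OrbitClosureRel

theorem IsDOpenAction.metrizableSpace {G X : Type*} [Group G] [UniformSpace G] [IsUniformGroup G]
    [TopologicalSpace X] [CompactSpace X] [T2Space X] [FirstCountableTopology X]
    [MulAction G X] [ContinuousSMul G X] [MulAction.IsPretransitive G X]
    (hd : IsDOpenAction G X) : TopologicalSpace.MetrizableSpace X := by
  rcases isEmpty_or_nonempty X with _ | ⟨⟨x₀⟩⟩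
  · exact TopologicalSpace.metrizableSpace_of_t3_secondCountable X
  obtain ⟨B, hB⟩ := (𝓝 x₀).exists_antitone_basis
  have hV : ∀ n, (· • x₀) ⁻¹' B n ∈ 𝓝 (1 : G) := fun n =>
    (continuous_id.smul continuous_const).continuousAt.preimage_mem_nhds (by simpa using hB.mem n)
  obtain ⟨U, hUo, hU1, hUconj, hUV, hUmul⟩ := exists_seq_isOpen_conj_invariant_nhds hV
  refine metrizableSpace_of_nested_nhds_diagonal (fun n => orbitClosureRel (U n))
    (fun n x => ?_) (fun n => ?_) (fun p hp => ?_)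
  · exact mem_of_superset (hd.orbitClosureRel_mem_nhds (hUo (n + 1)) (hU1 (n + 1)) x)
      (orbitClosureRel_mono (hUmul n))
  · exact (hd.closure_orbitClosureRel_subset (hUo _) (hU1 _)).trans
      (orbitClosureRel_mono ((mul_self_subset_mul_inv_mul (hU1 _)).trans (hUmul n)))
  · exact eq_of_forall_mem_orbitClosureRel hB.toHasBasis hUconj
      (fun n => image_subset_iff.2 (hUV n)) hp

theorem stmt19_general {G X : Type*} [Group G] [UniformSpace G] [IsUniformGroup G]
    [TopologicalSpace X] [CompactSpace X] [T2Space X]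
    [FirstCountableTopology X]
    (α : G → X → X)
    (hα1 : ∀ x, α 1 x = x) (hαm : ∀ g g' x, α (g * g') x = α g (α g' x))
    (hαc : Continuous fun p : G × X => α p.1 p.2)
    (htrans : ∀ x y : X, ∃ g : G, α g x = y)
    (hdopen : ∀ (x : X) (U : Set G), IsOpen U → (1 : G) ∈ U →
      x ∈ interior (closure ((fun g => α g x) '' U))) :
    TopologicalSpace.MetrizableSpace X := by
  let _ : MulAction G X := { smul := α, one_smul := hα1, mul_smul := hαm }
  have : ContinuousSMul G X := ⟨hαc⟩
  have : MulAction.IsPretransitive G X := ⟨htrans⟩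
  exact IsDOpenAction.metrizableSpace hdopen

theorem stmt19 {G X : Type*} [Group G] [UniformSpace G] [IsUniformGroup G]
    [CompleteSpace G] [BaireSpace G]
    [TopologicalSpace X] [CompactSpace X] [T2Space X]
    [FirstCountableTopology X]
    (α : G → X → X)
    (hα1 : ∀ x, α 1 x = x) (hαm : ∀ g g' x, α (g * g') x = α g (α g' x))
    (hαc : Continuous fun p : G × X => α p.1 p.2)
    (htrans : ∀ x y : X, ∃ g : G, α g x = y)
    (hdopen : ∀ (x : X) (U : Set G), IsOpen U → (1 : G) ∈ U →
      x ∈ interior (closure ((fun g => α g x) '' U))) :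
    TopologicalSpace.MetrizableSpace X :=
  stmt19_general α hα1 hαm hαc htrans hdopen
end
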